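/- Let K be a field of characteristic zero, X a finite connected poset, and fix u_0 ∈ X. Then each φ ∈ Δ(I(X,K)) is of the form φ = ad_c + φ_σ + φ_κ for a unique c ∈ Z([I(X,K),I(X,K)]), a unique map σ : X²_< → K which is constant on chains and constant on cycles in X, and a unique map κ : X → K. -/

import Mathlib

open scoped Classical

attribute [local instance] LieRing.ofAssociativeRing

noncomputable section

/-- A `1/2`-derivation of a Lie algebra `L` over `K`:
`φ ⁅a, b⁆ = (1/2) • (⁅φ a, b⁆ + ⁅a, φ b⁆)`. -/
def IsHalfDerivation (K L : Type*) [Field K] [LieRing L] [LieAlgebra K L]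
    (φ : L →ₗ[K] L) : Prop :=
  ∀ a b : L, φ ⁅a, b⁆ = (2⁻¹ : K) • (⁅φ a, b⁆ + ⁅a, φ b⁆)

/-- The derived subalgebra `[L, L]` (the span of all brackets), as a `K`-submodule. -/
def derivedSpan (K L : Type*) [Field K] [LieRing L] [LieAlgebra K L] : Submodule K L :=
  Submodule.span K {z : L | ∃ a b : L, z = ⁅a, b⁆}

/-- The standard basis element `e_{xy}` (for `x ≤ y`) of the incidence algebra. -/
def eI (K : Type*) {X : Type*} [Field K] [PartialOrder X] [DecidableEq X]
    (x y : X) (h : x ≤ y) : IncidenceAlgebra K X :=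
  ⟨fun u v => if x = u ∧ y = v then (1 : K) else 0, by
    intro u v huv
    show (if x = u ∧ y = v then (1 : K) else 0) = 0
    rw [if_neg]; rintro ⟨rfl, rfl⟩; exact huv h⟩

/-- Diagonal elements of the incidence algebra (the subspace `D(X,K)`). -/
def IsDiagI {K X : Type*} [Zero K] [LE X] (f : IncidenceAlgebra K X) : Prop :=
  ∀ x y : X, x ≠ y → f x y = 0

/-- A walk `u 0, u 1, …, u m` in a poset: consecutive vertices are comparable and
cover one another (`l(x,y) = 1`). -/
def IsWalkOn {X : Type*} [PartialOrder X] (u : ℕ → X) (m : ℕ) : Prop :=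
  ∀ i < m, u i ⋖ u (i + 1) ∨ u (i + 1) ⋖ u i

/-- A poset is connected if any two of its elements are joined by a walk. -/
def ConnectedPoset (X : Type*) [PartialOrder X] : Prop :=
  ∀ x y : X, ∃ (u : ℕ → X) (m : ℕ), IsWalkOn u m ∧ u 0 = x ∧ u m = y

/-- The set `X²_<` of pairs `(x, y)` with `x < y`. -/
def LtPairs (X : Type*) [PartialOrder X] : Type _ := {p : X × X // p.1 < p.2}

/-- The value of `σ : X²_< → K` at `(x, y)`, extended by `0` to all pairs. -/
def sigVal {K X : Type*} [Field K] [PartialOrder X] (σ : LtPairs X → K) (x y : X) : K :=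
  if h : x < y then σ ⟨(x, y), h⟩ else 0

/-- `s⁺_{σ,Γ}(x) = Σ_{x = u i < u (i+1)} σ (x, u (i+1))`. -/
def sP {K X : Type*} [Field K] [PartialOrder X] (σ : LtPairs X → K)
    (u : ℕ → X) (m : ℕ) (x : X) : K :=
  ∑ i ∈ Finset.range m, if x = u i then sigVal σ x (u (i + 1)) else 0

/-- `s⁻_{σ,Γ}(x) = Σ_{u i > u (i+1) = x} σ (x, u i)`. -/
def sM {K X : Type*} [Field K] [PartialOrder X] (σ : LtPairs X → K)
    (u : ℕ → X) (m : ℕ) (x : X) : K :=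
  ∑ i ∈ Finset.range m, if x = u (i + 1) then sigVal σ x (u i) else 0

/-- `t⁺_{σ,Γ}(x) = Σ_{x = u i > u (i+1)} σ (u (i+1), x)`. -/
def tP {K X : Type*} [Field K] [PartialOrder X] (σ : LtPairs X → K)
    (u : ℕ → X) (m : ℕ) (x : X) : K :=
  ∑ i ∈ Finset.range m, if x = u i then sigVal σ (u (i + 1)) x else 0

/-- `t⁻_{σ,Γ}(x) = Σ_{u i < u (i+1) = x} σ (u i, x)`. -/
def tM {K X : Type*} [Field K] [PartialOrder X] (σ : LtPairs X → K)
    (u : ℕ → X) (m : ℕ) (x : X) : K :=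
  ∑ i ∈ Finset.range m, if x = u (i + 1) then sigVal σ (u i) x else 0

/-- A cycle: a closed walk `u 0, …, u m = u 0` with `m ≥ 4` such that repeated
vertices occur only at the pair of indices `{0, m}`. -/
def IsCycleW {X : Type*} [PartialOrder X] (u : ℕ → X) (m : ℕ) : Prop :=
  IsWalkOn u m ∧ u m = u 0 ∧ 4 ≤ m ∧
    ∀ i ≤ m, ∀ j ≤ m, i ≠ j → u i = u j → (i = 0 ∧ j = m) ∨ (i = m ∧ j = 0)

/-- `σ` is constant on cycles. -/
def ConstOnCycles {K X : Type*} [Field K] [PartialOrder X] (σ : LtPairs X → K) : Prop :=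
  ∀ (u : ℕ → X) (m : ℕ), IsCycleW u m →
    ∃ k : K, ∀ i < m,
      (∀ h : u i < u (i + 1), σ ⟨(u i, u (i + 1)), h⟩ = k) ∧
      (∀ h : u (i + 1) < u i, σ ⟨(u (i + 1), u i), h⟩ = k)

/-- `σ` is constant on chains: `σ (x, y) = σ (u, v)` whenever `x < y` and `u < v` all
belong to a common chain, i.e. `{x, y, u, v}` is pairwise comparable. -/
def ConstOnChains {K X : Type*} [Field K] [PartialOrder X] (σ : LtPairs X → K) : Prop :=
  ∀ (x y u v : X) (h1 : x < y) (h2 : u < v),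
    (x ≤ u ∨ u ≤ x) → (x ≤ v ∨ v ≤ x) → (y ≤ u ∨ u ≤ y) → (y ≤ v ∨ v ≤ y) →
      σ ⟨(x, y), h1⟩ = σ ⟨(u, v), h2⟩

/-!
Put `c(u, v) = φ(e_v)(u, v)` for `u < v`. Testing the `1/2`-derivation identity on pairs of
basis elements shows that `c` is supported on `Min(X) × Max(X)`, hence commutes with
`[I(X,K), I(X,K)]`, and that `φ - ad_c` preserves diagonality. Removing the scalar part
`f ↦ φ(f)(u₀, u₀) δ` leaves a diagonality preserving `1/2`-derivation `φ_σ` with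
`φ_σ(e_{xy}) = σ(x, y) e_{xy}`, `σ(x, y) = φ_σ(e_x)(x, x) - φ_σ(e_x)(y, y)`. The diagonal of
`φ_σ(e_z)` takes equal values at comparable `x, y ≠ z`; along a chain this makes `σ` constant,
and going around a cycle it shows that consecutive edges carry the same value. Conversely
`c`, `σ` and `κ` are read off from the entries `φ(e_v)(u, v)`, `φ(e_{xy})(x, y)` and
`φ(e_x)(u₀, u₀)`, whence uniqueness.
-/

section HalfDerivation

variable {K L : Type*} [Field K] [LieRing L] [LieAlgebra K L]

theorem IsHalfDerivation.sub {φ ψ : L →ₗ[K] L} (hφ : IsHalfDerivation K L φ)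
    (hψ : IsHalfDerivation K L ψ) : IsHalfDerivation K L (φ - ψ) := by
  intro a b
  simp only [LinearMap.sub_apply, hφ a b, hψ a b, sub_lie, lie_sub, ← smul_sub]
  congr 1
  abel

theorem isHalfDerivation_ad {c : L} (hc : ∀ a b : L, ⁅c, ⁅a, b⁆⁆ = 0) :
    IsHalfDerivation K L (LieAlgebra.ad K L c) := by
  intro a b
  simp only [LieAlgebra.ad_apply]
  rw [← leibniz_lie, hc, smul_zero]

theorem isHalfDerivation_of_central {φ : L →ₗ[K] L} (hlie : ∀ a b : L, φ ⁅a, b⁆ = 0)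
    (hcentral : ∀ a b : L, ⁅φ a, b⁆ = 0) : IsHalfDerivation K L φ := by
  intro a b
  rw [hlie, hcentral, ← lie_skew, hcentral, neg_zero, add_zero, smul_zero]

end HalfDerivation

section Entries

variable {K X : Type*} [Field K] [PartialOrder X] [DecidableEq X]

theorem eI_apply (x y : X) (h : x ≤ y) (u v : X) :
    eI K x y h u v = if x = u ∧ y = v then 1 else 0 := rfl

theorem isDiagI_eI_self (x : X) : IsDiagI (eI K x x le_rfl) := by
  intro a b hab
  rw [eI_apply, if_neg]
  rintro ⟨rfl, rfl⟩
  exact hab rfl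

def diagOf (d : X → K) : IncidenceAlgebra K X :=
  ⟨fun a b => if a = b then d a else 0, fun _ _ h => if_neg fun hab => h hab.le⟩

theorem isDiagI_diagOf (d : X → K) : IsDiagI (diagOf d) :=
  fun _ _ hab => if_neg hab

theorem diagOf_apply_self (d : X → K) (x : X) : diagOf d x x = d x := if_pos rfl

/-- The element `c` of the decomposition `φ = ad_c + φ_σ + φ_κ`. -/
def centralPart (φ : IncidenceAlgebra K X →ₗ[K] IncidenceAlgebra K X) : IncidenceAlgebra K X :=
  ⟨fun a b => if a < b then φ (eI K b b le_rfl) a b else 0,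
    fun _ _ h => if_neg fun h' => h h'.le⟩

theorem centralPart_apply (φ : IncidenceAlgebra K X →ₗ[K] IncidenceAlgebra K X) (a b : X) :
    centralPart φ a b = if a < b then φ (eI K b b le_rfl) a b else 0 := rfl

theorem lt_of_centralPart_apply_ne_zero {φ : IncidenceAlgebra K X →ₗ[K] IncidenceAlgebra K X}
    {u v : X} (h : centralPart φ u v ≠ 0) : u < v := by
  by_contra huv
  exact h (if_neg huv)

theorem centralPart_apply_of_ne (φ : IncidenceAlgebra K X →ₗ[K] IncidenceAlgebra K X) {a b : X}
    (hab : a ≠ b) : centralPart φ a b = φ (eI K b b le_rfl) a b := by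
  rw [centralPart_apply]
  split_ifs with hlt
  · rfl
  · rw [IncidenceAlgebra.apply_eq_zero_of_not_le fun h => hlt (lt_of_le_of_ne h hab)]

def IsDiagonalityPreserving (ψ : IncidenceAlgebra K X →ₗ[K] IncidenceAlgebra K X) : Prop :=
  ∀ f, IsDiagI f → IsDiagI (ψ f)

def edgeWeight (ψ : IncidenceAlgebra K X →ₗ[K] IncidenceAlgebra K X) (a b : X) : K :=
  ψ (eI K a a le_rfl) a a - ψ (eI K a a le_rfl) b b

end Entries

section Products

variable {K X : Type*} [Field K] [PartialOrder X] [LocallyFiniteOrder X]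

theorem IsDiagI.mul_apply {f : IncidenceAlgebra K X} (hf : IsDiagI f)
    (g : IncidenceAlgebra K X) (u v : X) : (f * g) u v = f u u * g u v := by
  by_cases huv : u ≤ v
  · rw [IncidenceAlgebra.mul_apply,
      Finset.sum_eq_single_of_mem u (Finset.mem_Icc.2 ⟨le_rfl, huv⟩)]
    intro w _ hwu
    rw [hf u w (Ne.symm hwu), zero_mul]
  · rw [IncidenceAlgebra.apply_eq_zero_of_not_le huv,
      IncidenceAlgebra.apply_eq_zero_of_not_le huv, mul_zero]

theorem IsDiagI.mul_apply' {f : IncidenceAlgebra K X} (hf : IsDiagI f)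
    (g : IncidenceAlgebra K X) (u v : X) : (g * f) u v = g u v * f v v := by
  by_cases huv : u ≤ v
  · rw [IncidenceAlgebra.mul_apply,
      Finset.sum_eq_single_of_mem v (Finset.mem_Icc.2 ⟨huv, le_rfl⟩)]
    intro w _ hwv
    rw [hf w v hwv, mul_zero]
  · rw [IncidenceAlgebra.apply_eq_zero_of_not_le huv,
      IncidenceAlgebra.apply_eq_zero_of_not_le huv, zero_mul]

end Products

section Brackets

variable {K X : Type*} [Field K] [PartialOrder X] [LocallyFiniteOrder X] [DecidableEq X]

theorem mul_eI_apply (f : IncidenceAlgebra K X) {x y : X} (h : x ≤ y) (a b : X) :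
    (f * eI K x y h) a b = if y = b then f a x else 0 := by
  simp only [IncidenceAlgebra.mul_apply, eI_apply, mul_ite, mul_one, mul_zero, ite_and]
  split_ifs with hyb
  · subst hyb
    rw [Finset.sum_ite_eq]
    by_cases hax : a ≤ x
    · rw [if_pos (Finset.mem_Icc.2 ⟨hax, h⟩)]
    · rw [if_neg (fun h' => hax (Finset.mem_Icc.1 h').1),
        IncidenceAlgebra.apply_eq_zero_of_not_le hax]
  · simp

theorem eI_mul_apply (f : IncidenceAlgebra K X) {x y : X} (h : x ≤ y) (a b : X) :
    (eI K x y h * f) a b = if x = a then f y b else 0 := by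
  simp only [IncidenceAlgebra.mul_apply, eI_apply, ite_mul, one_mul, zero_mul, ite_and]
  split_ifs with hxa
  · subst hxa
    rw [Finset.sum_ite_eq]
    by_cases hyb : y ≤ b
    · rw [if_pos (Finset.mem_Icc.2 ⟨h, hyb⟩)]
    · rw [if_neg (fun h' => hyb (Finset.mem_Icc.1 h').2),
        IncidenceAlgebra.apply_eq_zero_of_not_le hyb]
  · simp

theorem lie_eI_apply (f : IncidenceAlgebra K X) {x y : X} (h : x ≤ y) (a b : X) :
    ⁅f, eI K x y h⁆ a b = (if y = b then f a x else 0) - (if x = a then f y b else 0) := by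
  rw [Ring.lie_def, IncidenceAlgebra.sub_apply, mul_eI_apply, eI_mul_apply]

theorem eI_lie_apply (f : IncidenceAlgebra K X) {x y : X} (h : x ≤ y) (a b : X) :
    ⁅eI K x y h, f⁆ a b = (if x = a then f y b else 0) - (if y = b then f a x else 0) := by
  rw [Ring.lie_def, IncidenceAlgebra.sub_apply, mul_eI_apply, eI_mul_apply]

theorem lie_eI_eI_of_ne {x y u v : X} (hxy : x ≤ y) (huv : u ≤ v) (hyu : y ≠ u)
    (hvx : v ≠ x) :
    ⁅eI K x y hxy, eI K u v huv⁆ = 0 := by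
  ext a b _
  rw [lie_eI_apply, IncidenceAlgebra.zero_apply, eI_apply, eI_apply]
  grind

theorem eI_self_lie_eI {x y : X} (h : x < y) :
    ⁅eI K x x le_rfl, eI K x y h.le⁆ = eI K x y h.le := by
  ext a b _
  rw [eI_lie_apply, eI_apply, eI_apply, eI_apply]
  grind

theorem eI_self_lie_eI' {x y : X} (h : x < y) :
    ⁅eI K y y le_rfl, eI K x y h.le⁆ = -eI K x y h.le := by
  ext a b _
  rw [eI_lie_apply, IncidenceAlgebra.neg_apply, eI_apply, eI_apply, eI_apply]
  grind

theorem lie_apply_self_eq_zero (f g : IncidenceAlgebra K X) (x : X) : ⁅f, g⁆ x x = 0 := by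
  simp [Ring.lie_def, mul_comm]

theorem apply_self_eq_zero_of_mem_derivedSpan {f : IncidenceAlgebra K X}
    (hf : f ∈ derivedSpan K (IncidenceAlgebra K X)) (x : X) : f x x = 0 := by
  induction hf using Submodule.span_induction with
  | mem g hg => obtain ⟨a, b, rfl⟩ := hg; exact lie_apply_self_eq_zero a b x
  | zero => rfl
  | add a b _ _ ha hb => rw [IncidenceAlgebra.add_apply, ha, hb, add_zero]
  | smul k a _ ha => rw [IncidenceAlgebra.constSMul_apply, ha, smul_zero]

theorem eI_mem_derivedSpan {x y : X} (h : x < y) :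
    eI K x y h.le ∈ derivedSpan K (IncidenceAlgebra K X) :=
  Submodule.subset_span ⟨_, _, (eI_self_lie_eI h).symm⟩

theorem IsDiagI.lie_apply {f : IncidenceAlgebra K X} (hf : IsDiagI f)
    (g : IncidenceAlgebra K X) (u v : X) : ⁅f, g⁆ u v = (f u u - f v v) * g u v := by
  rw [Ring.lie_def, IncidenceAlgebra.sub_apply, hf.mul_apply, hf.mul_apply']
  ring

theorem IsDiagI.lie_eq_zero {f g : IncidenceAlgebra K X} (hf : IsDiagI f) (hg : IsDiagI g) :
    ⁅f, g⁆ = 0 := by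
  ext u v _
  rw [hf.lie_apply, IncidenceAlgebra.zero_apply]
  rcases eq_or_ne u v with rfl | huv
  · rw [sub_self, zero_mul]
  · rw [hg u v huv, mul_zero]

end Brackets

section HalfDerivationsOfIncidenceAlgebra

variable {K X : Type*} [Field K] [PartialOrder X] [LocallyFiniteOrder X] [DecidableEq X]
  {φ : IncidenceAlgebra K X →ₗ[K] IncidenceAlgebra K X}

theorem IsHalfDerivation.apply_lie_apply_self_eq_zero
    (hφ : IsHalfDerivation K (IncidenceAlgebra K X) φ) (a b : IncidenceAlgebra K X) (x : X) :
    φ ⁅a, b⁆ x x = 0 := by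
  rw [hφ a b, IncidenceAlgebra.constSMul_apply, IncidenceAlgebra.add_apply,
    lie_apply_self_eq_zero, lie_apply_self_eq_zero, add_zero, smul_zero]

theorem IsHalfDerivation.lie_apply_add [CharZero K]
    (hφ : IsHalfDerivation K (IncidenceAlgebra K X) φ) (a b : IncidenceAlgebra K X) (u v : X) :
    ⁅φ a, b⁆ u v + ⁅a, φ b⁆ u v = 2 * φ ⁅a, b⁆ u v := by
  rw [hφ a b, IncidenceAlgebra.constSMul_apply, IncidenceAlgebra.add_apply, smul_eq_mul,
    ← mul_assoc, mul_inv_cancel₀ two_ne_zero, one_mul]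

variable [CharZero K]

theorem IsHalfDerivation.apply_of_isDiagI (hφ : IsHalfDerivation K (IncidenceAlgebra K X) φ)
    {f : IncidenceAlgebra K X} (hf : IsDiagI f) {u v : X} (huv : u ≠ v) :
    φ f u v = (f v v - f u u) * φ (eI K v v le_rfl) u v := by
  have h := hφ.lie_apply_add f (eI K v v le_rfl) u v
  rw [hf.lie_eq_zero (isDiagI_eI_self v), map_zero, IncidenceAlgebra.zero_apply, lie_eI_apply,
    if_pos rfl, if_neg huv.symm, hf.lie_apply] at h
  linear_combination h

theorem IsHalfDerivation.apply_eI_self_of_ne (hφ : IsHalfDerivation K (IncidenceAlgebra K X) φ)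
    {z u v : X} (huv : u ≠ v) (hzu : z ≠ u) (hzv : z ≠ v) : φ (eI K z z le_rfl) u v = 0 := by
  rw [hφ.apply_of_isDiagI (isDiagI_eI_self z) huv, eI_apply, eI_apply, if_neg (by tauto),
    if_neg (by tauto), sub_zero, zero_mul]

theorem IsHalfDerivation.apply_eI_self_left (hφ : IsHalfDerivation K (IncidenceAlgebra K X) φ)
    {u v : X} (huv : u ≠ v) : φ (eI K u u le_rfl) u v = -φ (eI K v v le_rfl) u v := by
  rw [hφ.apply_of_isDiagI (isDiagI_eI_self u) huv, eI_apply, eI_apply, if_neg (by tauto),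
    if_pos ⟨rfl, rfl⟩]
  ring

theorem IsHalfDerivation.centralPart_apply_eq_zero_of_lt_left
    (hφ : IsHalfDerivation K (IncidenceAlgebra K X) φ) {w u : X} (hwu : w < u) (v : X) :
    centralPart φ u v = 0 := by
  rw [centralPart_apply]
  split_ifs with huv
  · have hwv : w ≠ v := (hwu.trans huv).ne
    have h1 := hφ.lie_apply_add (eI K w u hwu.le) (eI K v v le_rfl) w v
    rw [lie_eI_eI_of_ne hwu.le le_rfl huv.ne hwv.symm, map_zero, IncidenceAlgebra.zero_apply,
      lie_eI_apply, eI_lie_apply, if_pos rfl, if_neg hwv.symm, if_pos rfl,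
      if_neg huv.ne] at h1
    have h2 := hφ.lie_apply_add (eI K w w le_rfl) (eI K w u hwu.le) w v
    rw [eI_self_lie_eI hwu, lie_eI_apply, eI_lie_apply, if_neg huv.ne, if_pos rfl, if_pos rfl,
      if_neg hwv, hφ.apply_eI_self_of_ne huv.ne hwu.ne hwv] at h2
    linear_combination h1 + h2
  · rfl

theorem IsHalfDerivation.centralPart_apply_eq_zero_of_lt_right
    (hφ : IsHalfDerivation K (IncidenceAlgebra K X) φ) (u : X) {v t : X} (hvt : v < t) :
    centralPart φ u v = 0 := by
  rw [centralPart_apply]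
  split_ifs with huv
  · have hut : u ≠ t := (huv.trans hvt).ne
    have h1 := hφ.lie_apply_add (eI K t t le_rfl) (eI K v t hvt.le) u t
    rw [eI_self_lie_eI' hvt, map_neg, IncidenceAlgebra.neg_apply, lie_eI_apply, eI_lie_apply,
      if_pos rfl, if_neg huv.ne', if_neg hut.symm, if_pos rfl,
      hφ.apply_eI_self_of_ne huv.ne hut.symm hvt.ne'] at h1
    have h2 := hφ.lie_apply_add (eI K v t hvt.le) (eI K u u le_rfl) u t
    rw [lie_eI_eI_of_ne hvt.le le_rfl hut.symm huv.ne, map_zero, IncidenceAlgebra.zero_apply,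
      lie_eI_apply, eI_lie_apply, if_neg hut, if_pos rfl, if_neg huv.ne', if_pos rfl] at h2
    linear_combination h1 + h2 + hφ.apply_eI_self_left huv.ne
  · rfl

theorem IsHalfDerivation.isMin_of_centralPart_apply_ne_zero
    (hφ : IsHalfDerivation K (IncidenceAlgebra K X) φ) {u v : X} (h : centralPart φ u v ≠ 0) :
    IsMin u :=
  isMin_iff_forall_not_lt.2 fun _ hwu => h (hφ.centralPart_apply_eq_zero_of_lt_left hwu v)

theorem IsHalfDerivation.isMax_of_centralPart_apply_ne_zero
    (hφ : IsHalfDerivation K (IncidenceAlgebra K X) φ) {u v : X} (h : centralPart φ u v ≠ 0) :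
    IsMax v :=
  isMax_iff_forall_not_lt.2 fun _ hvt => h (hφ.centralPart_apply_eq_zero_of_lt_right u hvt)

end HalfDerivationsOfIncidenceAlgebra

section CentralPart

variable {K X : Type*} [Field K] [CharZero K] [PartialOrder X] [LocallyFiniteOrder X]
  [DecidableEq X] {φ : IncidenceAlgebra K X →ₗ[K] IncidenceAlgebra K X}

theorem IsHalfDerivation.lie_centralPart_eq_zero
    (hφ : IsHalfDerivation K (IncidenceAlgebra K X) φ) {f : IncidenceAlgebra K X}
    (hf : ∀ x, f x x = 0) : ⁅centralPart φ, f⁆ = 0 := by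
  ext a b _
  have hleft : ∀ w ∈ Finset.Icc a b, centralPart φ a w * f w b = 0 := by
    intro w hw
    by_cases hc : centralPart φ a w = 0
    · rw [hc, zero_mul]
    · rw [← (hφ.isMax_of_centralPart_apply_ne_zero hc).eq_of_ge (Finset.mem_Icc.1 hw).2, hf,
        mul_zero]
  have hright : ∀ w ∈ Finset.Icc a b, f a w * centralPart φ w b = 0 := by
    intro w hw
    by_cases hc : centralPart φ w b = 0
    · rw [hc, mul_zero]
    · rw [(hφ.isMin_of_centralPart_apply_ne_zero hc).eq_of_le (Finset.mem_Icc.1 hw).1, hf,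
        zero_mul]
  rw [Ring.lie_def, IncidenceAlgebra.sub_apply, IncidenceAlgebra.mul_apply,
    IncidenceAlgebra.mul_apply, Finset.sum_eq_zero hleft, Finset.sum_eq_zero hright, sub_zero,
    IncidenceAlgebra.zero_apply]

/-- `c` is supported on `Min(X) × Max(X)`, so bracketing with the indicator of `Min(X)` fixes
it. -/
theorem IsHalfDerivation.centralPart_mem_derivedSpan
    (hφ : IsHalfDerivation K (IncidenceAlgebra K X) φ) :
    centralPart φ ∈ derivedSpan K (IncidenceAlgebra K X) := by
  set δMin := diagOf fun x : X => if IsMin x then (1 : K) else 0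
  have hfix : ⁅δMin, centralPart φ⁆ = centralPart φ := by
    ext u v _
    rw [(isDiagI_diagOf _).lie_apply, diagOf_apply_self, diagOf_apply_self]
    by_cases hc : centralPart φ u v = 0
    · rw [hc, mul_zero]
    · rw [if_pos (hφ.isMin_of_centralPart_apply_ne_zero hc),
        if_neg fun hv => hv.not_lt (lt_of_centralPart_apply_ne_zero hc), sub_zero, one_mul]
  rw [← hfix]
  exact Submodule.subset_span ⟨_, _, rfl⟩

theorem IsHalfDerivation.apply_of_isDiagI_eq_lie_centralPart
    (hφ : IsHalfDerivation K (IncidenceAlgebra K X) φ) {f : IncidenceAlgebra K X}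
    (hf : IsDiagI f) {u v : X} (huv : u ≠ v) : φ f u v = ⁅centralPart φ, f⁆ u v := by
  rw [← lie_skew, IncidenceAlgebra.neg_apply, hf.lie_apply, hφ.apply_of_isDiagI hf huv,
    centralPart_apply]
  split_ifs with hlt
  · ring
  · rw [IncidenceAlgebra.apply_eq_zero_of_not_le fun h => hlt (lt_of_le_of_ne h huv)]
    ring

end CentralPart

section DiagonalityPreserving

variable {K X : Type*} [Field K] [CharZero K] [PartialOrder X] [LocallyFiniteOrder X]
  [DecidableEq X] {ψ : IncidenceAlgebra K X →ₗ[K] IncidenceAlgebra K X}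

theorem IsHalfDerivation.apply_eI_self_apply_self_eq
    (hψ : IsHalfDerivation K (IncidenceAlgebra K X) ψ) {x y z : X} (hxy : x < y) (hzx : z ≠ x)
    (hzy : z ≠ y) : ψ (eI K z z le_rfl) x x = ψ (eI K z z le_rfl) y y := by
  have h := hψ.lie_apply_add (eI K z z le_rfl) (eI K x y hxy.le) x y
  rw [lie_eI_eI_of_ne le_rfl hxy.le hzx hzy.symm, map_zero, IncidenceAlgebra.zero_apply,
    lie_eI_apply, eI_lie_apply, if_pos rfl, if_pos rfl, if_neg hzx, if_neg hzy] at h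
  linear_combination h

theorem IsHalfDerivation.apply_eI_of_lt (hψ : IsHalfDerivation K (IncidenceAlgebra K X) ψ)
    (hdiag : IsDiagonalityPreserving ψ) {x y : X} (hxy : x < y) :
    ψ (eI K x y hxy.le) = edgeWeight ψ x y • eI K x y hxy.le := by
  ext a b _
  have hx := hdiag _ (isDiagI_eI_self x)
  have h := hψ.lie_apply_add (eI K x x le_rfl) (eI K x y hxy.le) a b
  rw [eI_self_lie_eI hxy, lie_eI_apply, eI_lie_apply] at h
  rw [IncidenceAlgebra.constSMul_apply, smul_eq_mul, eI_apply, edgeWeight]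
  -- off `(x, y)`, `h` reads `(2 - λ) * ψ e_{xy} (a, b) = 0`, where `λ ∈ {-1, 0, 1}` is the
  -- eigenvalue of `ad e_x` at `e_{ab}`
  rcases eq_or_ne x a with rfl | hxa
  · rcases eq_or_ne y b with rfl | hyb
    · rw [if_pos rfl, if_pos rfl, if_pos rfl, if_neg hxy.ne] at h
      rw [if_pos ⟨rfl, rfl⟩]
      linear_combination -h
    · rw [if_neg hyb, if_pos rfl, if_pos rfl, hx y b hyb] at h
      rw [if_neg fun h' => hyb h'.2, mul_zero]
      split_ifs at h with hxb
      · subst hxb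
        exact (mul_eq_zero.1 (by linear_combination -h : (2 : K) * _ = 0)).resolve_left two_ne_zero
      · linear_combination -h
  · rw [if_neg hxa, if_neg hxa, hx a x (Ne.symm hxa), ite_self] at h
    rw [if_neg fun h' => hxa h'.1, mul_zero]
    split_ifs at h with hxb
    · subst hxb
      exact (mul_eq_zero.1 (by linear_combination -h : (3 : K) * _ = 0)).resolve_left three_ne_zero
    · exact (mul_eq_zero.1 (by linear_combination -h : (2 : K) * _ = 0)).resolve_left two_ne_zero

theorem IsHalfDerivation.edgeWeight_comm (hψ : IsHalfDerivation K (IncidenceAlgebra K X) ψ)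
    (hdiag : IsDiagonalityPreserving ψ) {x y : X} (hxy : x < y) :
    edgeWeight ψ y x = edgeWeight ψ x y := by
  have h := hψ.lie_apply_add (eI K y y le_rfl) (eI K x y hxy.le) x y
  rw [eI_self_lie_eI' hxy, map_neg, IncidenceAlgebra.neg_apply, lie_eI_apply, eI_lie_apply,
    if_pos rfl, if_pos rfl, if_neg hxy.ne', if_pos rfl, hψ.apply_eI_of_lt hdiag hxy,
    IncidenceAlgebra.constSMul_apply, eI_apply, if_pos ⟨rfl, rfl⟩, smul_eq_mul, mul_one] at h
  rw [edgeWeight]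
  linear_combination -h

end DiagonalityPreserving

section Invariance

variable {K X : Type*} [Field K] [CharZero K] [PartialOrder X] [LocallyFiniteOrder X]
  [DecidableEq X] {ψ : IncidenceAlgebra K X →ₗ[K] IncidenceAlgebra K X}

theorem IsHalfDerivation.edgeWeight_eq_of_lt_of_lt_right
    (hψ : IsHalfDerivation K (IncidenceAlgebra K X) ψ) {x y z : X} (hxy : x < y) (hyz : y < z) :
    edgeWeight ψ x y = edgeWeight ψ x z := by
  rw [edgeWeight, edgeWeight, hψ.apply_eI_self_apply_self_eq hyz hxy.ne (hxy.trans hyz).ne]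

theorem IsHalfDerivation.edgeWeight_eq_of_lt_of_lt_left
    (hψ : IsHalfDerivation K (IncidenceAlgebra K X) ψ) (hdiag : IsDiagonalityPreserving ψ)
    {x y z : X} (hxy : x < y) (hyz : y < z) : edgeWeight ψ y z = edgeWeight ψ x z := by
  rw [← hψ.edgeWeight_comm hdiag hyz, ← hψ.edgeWeight_comm hdiag (hxy.trans hyz), edgeWeight,
    edgeWeight, hψ.apply_eI_self_apply_self_eq hxy (hxy.trans hyz).ne' hyz.ne']

theorem IsHalfDerivation.edgeWeight_eq_of_le_of_le
    (hψ : IsHalfDerivation K (IncidenceAlgebra K X) ψ) (hdiag : IsDiagonalityPreserving ψ)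
    {m x y M : X} (hmx : m ≤ x) (hxy : x < y) (hyM : y ≤ M) :
    edgeWeight ψ x y = edgeWeight ψ m M := by
  have hxM : edgeWeight ψ x y = edgeWeight ψ x M := by
    rcases hyM.eq_or_lt with rfl | hyM
    · rfl
    · exact hψ.edgeWeight_eq_of_lt_of_lt_right hxy hyM
  rw [hxM]
  rcases hmx.eq_or_lt with rfl | hmx
  · rfl
  · exact hψ.edgeWeight_eq_of_lt_of_lt_left hdiag hmx (hxy.trans_le hyM)

theorem IsHalfDerivation.constOnChains_edgeWeight
    (hψ : IsHalfDerivation K (IncidenceAlgebra K X) ψ) (hdiag : IsDiagonalityPreserving ψ) :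
    ConstOnChains fun p : LtPairs X => edgeWeight ψ p.1.1 p.1.2 := by
  intro x y u v hxy huv hxu _ _ hyv
  change edgeWeight ψ x y = edgeWeight ψ u v
  rcases hxu with hxu | hux <;> rcases hyv with hyv | hvy
  · rw [hψ.edgeWeight_eq_of_le_of_le hdiag le_rfl hxy hyv,
      hψ.edgeWeight_eq_of_le_of_le hdiag hxu huv le_rfl]
  · exact (hψ.edgeWeight_eq_of_le_of_le hdiag hxu huv hvy).symm
  · exact hψ.edgeWeight_eq_of_le_of_le hdiag hux hxy hyv
  · rw [hψ.edgeWeight_eq_of_le_of_le hdiag hux hxy le_rfl,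
      hψ.edgeWeight_eq_of_le_of_le hdiag le_rfl huv hvy]

theorem IsHalfDerivation.apply_eI_self_apply_self_eq_of_walk
    (hψ : IsHalfDerivation K (IncidenceAlgebra K X) ψ) {u : ℕ → X} {w : X} {a b : ℕ}
    (hab : a ≤ b)
    (hwalk : ∀ j, a ≤ j → j < b →
      (u j < u (j + 1) ∨ u (j + 1) < u j) ∧ u j ≠ w ∧ u (j + 1) ≠ w) :
    ψ (eI K w w le_rfl) (u a) (u a) = ψ (eI K w w le_rfl) (u b) (u b) := by
  induction b, hab using Nat.le_induction with
  | base => rfl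
  | succ b hab ih =>
    obtain ⟨hcmp, hb, hb1⟩ := hwalk b hab b.lt_succ_self
    rw [ih fun j hj hjb => hwalk j hj (hjb.trans b.lt_succ_self)]
    rcases hcmp with h | h
    · exact hψ.apply_eI_self_apply_self_eq h hb.symm hb1.symm
    · exact (hψ.apply_eI_self_apply_self_eq h hb1.symm hb.symm).symm

theorem IsHalfDerivation.edgeWeight_comm_of_lt_or_lt
    (hψ : IsHalfDerivation K (IncidenceAlgebra K X) ψ) (hdiag : IsDiagonalityPreserving ψ)
    {x y : X} (h : x < y ∨ y < x) :
    edgeWeight ψ y x = edgeWeight ψ x y := by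
  rcases h with h | h
  · exact hψ.edgeWeight_comm hdiag h
  · exact (hψ.edgeWeight_comm hdiag h).symm

/-- Going around the cycle from `u (i + 2)` back to `u i` avoids `u (i + 1)`, so the diagonal of
`ψ e_{u (i + 1)}` takes the same value at both neighbours of `u (i + 1)`. -/
theorem IsHalfDerivation.edgeWeight_succ_of_isCycleW
    (hψ : IsHalfDerivation K (IncidenceAlgebra K X) ψ) (hdiag : IsDiagonalityPreserving ψ)
    {u : ℕ → X} {m : ℕ} (hc : IsCycleW u m) {i : ℕ} (hi : i + 1 < m) :
    edgeWeight ψ (u (i + 1)) (u (i + 1 + 1)) = edgeWeight ψ (u i) (u (i + 1)) := by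
  obtain ⟨hwalk, hclose, -, hsimple⟩ := hc
  have hcmp : ∀ j < m, u j < u (j + 1) ∨ u (j + 1) < u j :=
    fun j hj => (hwalk j hj).imp CovBy.lt CovBy.lt
  have hne : ∀ j ≤ m, j ≠ i + 1 → u j ≠ u (i + 1) := fun j hj hji heq => by
    rcases hsimple j hj (i + 1) hi.le hji heq with h | h <;> omega
  have hfar := hψ.apply_eI_self_apply_self_eq_of_walk (u := u) (w := u (i + 1)) hi
    fun j hj hjm => ⟨hcmp j hjm, hne j (by omega) (by omega), hne (j + 1) hjm (by omega)⟩
  have hnear := hψ.apply_eI_self_apply_self_eq_of_walk (u := u) (w := u (i + 1)) (Nat.zero_le i)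
    fun j _ hji =>
      ⟨hcmp j (by omega), hne j (by omega) (by omega), hne (j + 1) (by omega) (by omega)⟩
  rw [edgeWeight, hfar, hclose, hnear, ← edgeWeight,
    hψ.edgeWeight_comm_of_lt_or_lt hdiag (hcmp i (by omega))]

theorem IsHalfDerivation.constOnCycles_edgeWeight
    (hψ : IsHalfDerivation K (IncidenceAlgebra K X) ψ) (hdiag : IsDiagonalityPreserving ψ) :
    ConstOnCycles fun p : LtPairs X => edgeWeight ψ p.1.1 p.1.2 := by
  intro u m hc
  have hconst : ∀ i < m, edgeWeight ψ (u i) (u (i + 1)) = edgeWeight ψ (u 0) (u 1) := by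
    intro i hi
    induction i with
    | zero => rfl
    | succ i ih => rw [hψ.edgeWeight_succ_of_isCycleW hdiag hc hi, ih (by omega)]
  refine ⟨edgeWeight ψ (u 0) (u 1), fun i hi => ⟨fun _ => hconst i hi, fun h => ?_⟩⟩
  change edgeWeight ψ (u (i + 1)) (u i) = _
  rw [← hconst i hi]
  exact (hψ.edgeWeight_comm hdiag h).symm

end Invariance

section Decomposition

variable {K X : Type*} [Field K] [PartialOrder X] [LocallyFiniteOrder X] [DecidableEq X]

/-- `φ_κ`, with `κ x = φ e_x (u0, u0)`. -/
def scalarPart (φ : IncidenceAlgebra K X →ₗ[K] IncidenceAlgebra K X) (u0 : X) :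
    IncidenceAlgebra K X →ₗ[K] IncidenceAlgebra K X where
  toFun f := φ f u0 u0 • 1
  map_add' f g := by rw [map_add, IncidenceAlgebra.add_apply, add_smul]
  map_smul' k f := by
    rw [map_smul, IncidenceAlgebra.constSMul_apply, smul_eq_mul, RingHom.id_apply, mul_smul]

def sigmaPart (φ : IncidenceAlgebra K X →ₗ[K] IncidenceAlgebra K X) (u0 : X) :
    IncidenceAlgebra K X →ₗ[K] IncidenceAlgebra K X :=
  φ - LieAlgebra.ad K _ (centralPart φ) - scalarPart φ u0

/-- `t = (c, σ, κ)` decomposes `φ` as `ad_c + φ_σ + φ_κ`. -/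
def IsDecomposition (φ : IncidenceAlgebra K X →ₗ[K] IncidenceAlgebra K X) (u0 : X)
    (t : IncidenceAlgebra K X × (LtPairs X → K) × (X → K)) : Prop :=
  (t.1 ∈ derivedSpan K (IncidenceAlgebra K X) ∧
    ∀ f ∈ derivedSpan K (IncidenceAlgebra K X), ⁅t.1, f⁆ = 0) ∧
  ConstOnChains t.2.1 ∧ ConstOnCycles t.2.1 ∧
  ∃ φσ φκ : IncidenceAlgebra K X →ₗ[K] IncidenceAlgebra K X,
    IsHalfDerivation K (IncidenceAlgebra K X) φσ ∧ IsDiagonalityPreserving φσ ∧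
    (∀ (x y : X) (h : x < y),
        φσ (eI K x y h.le) = t.2.1 ⟨(x, y), h⟩ • eI K x y h.le) ∧
    (∀ x : X, φσ (eI K x x le_rfl) u0 u0 = 0) ∧
    (∀ x : X, φκ (eI K x x le_rfl) = t.2.2 x • (1 : IncidenceAlgebra K X)) ∧
    (∀ (x y : X) (h : x < y), φκ (eI K x y h.le) = 0) ∧
    (∀ a : IncidenceAlgebra K X, φ a = ⁅t.1, a⁆ + φσ a + φκ a)

variable {φ : IncidenceAlgebra K X →ₗ[K] IncidenceAlgebra K X}

theorem sigmaPart_apply (u0 : X) (f : IncidenceAlgebra K X) :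
    sigmaPart φ u0 f = φ f - ⁅centralPart φ, f⁆ - φ f u0 u0 • 1 := rfl

theorem IsHalfDerivation.isHalfDerivation_scalarPart
    (hφ : IsHalfDerivation K (IncidenceAlgebra K X) φ) (u0 : X) :
    IsHalfDerivation K (IncidenceAlgebra K X) (scalarPart φ u0) := by
  refine isHalfDerivation_of_central (fun a b => ?_) fun a b => ?_
  · change φ ⁅a, b⁆ u0 u0 • (1 : IncidenceAlgebra K X) = 0
    rw [hφ.apply_lie_apply_self_eq_zero, zero_smul]
  · change ⁅φ a u0 u0 • (1 : IncidenceAlgebra K X), b⁆ = 0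
    rw [smul_lie, Ring.lie_def, one_mul, mul_one, sub_self, smul_zero]

theorem IsHalfDerivation.apply_eI_apply_self_eq_zero
    (hφ : IsHalfDerivation K (IncidenceAlgebra K X) φ) {x y : X} (hxy : x < y) (z : X) :
    φ (eI K x y hxy.le) z z = 0 := by
  rw [← eI_self_lie_eI hxy, hφ.apply_lie_apply_self_eq_zero]

theorem eq_of_isDecomposition {u0 : X}
    {t : IncidenceAlgebra K X × (LtPairs X → K) × (X → K)} (ht : IsDecomposition φ u0 t) :
    t = (centralPart φ, fun p => φ (eI K p.1.1 p.1.2 p.2.le) p.1.1 p.1.2,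
      fun x => φ (eI K x x le_rfl) u0 u0) := by
  obtain ⟨⟨hc, hcentral⟩, -, -, φσ, φκ, -, hσdiag, hσ, hσu0, hκ, hκ0, hdec⟩ := ht
  have entry (a : IncidenceAlgebra K X) (u v : X) :=
    congrArg (fun g : IncidenceAlgebra K X => g u v) (hdec a)
  refine Prod.ext ?_ (Prod.ext ?_ ?_)
  · ext a b _
    rcases eq_or_ne a b with rfl | hab
    · rw [apply_self_eq_zero_of_mem_derivedSpan hc, centralPart_apply, if_neg (lt_irrefl a)]
    · have h := entry (eI K b b le_rfl) a b
      simp only [IncidenceAlgebra.add_apply, lie_eI_apply, hσdiag _ (isDiagI_eI_self b) a b hab,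
        hκ, IncidenceAlgebra.constSMul_apply, IncidenceAlgebra.one_apply, if_neg hab,
        if_neg hab.symm, if_true, smul_zero, add_zero, sub_zero] at h
      rw [centralPart_apply_of_ne φ hab, h]
  · funext ⟨⟨x, y⟩, hxy⟩
    have h := entry (eI K x y hxy.le) x y
    rw [hcentral _ (eI_mem_derivedSpan hxy), hσ x y hxy, hκ0 x y hxy, add_zero, zero_add,
      IncidenceAlgebra.constSMul_apply, eI_apply, if_pos ⟨rfl, rfl⟩, smul_eq_mul,
      mul_one] at h
    exact h.symm
  · funext x
    have h := entry (eI K x x le_rfl) u0 u0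
    rw [hκ, IncidenceAlgebra.add_apply, IncidenceAlgebra.add_apply, lie_apply_self_eq_zero, hσu0,
      IncidenceAlgebra.constSMul_apply, IncidenceAlgebra.one_apply, if_pos rfl, smul_eq_mul,
      mul_one, zero_add, zero_add] at h
    exact h.symm

variable [CharZero K]

theorem IsHalfDerivation.isHalfDerivation_sigmaPart
    (hφ : IsHalfDerivation K (IncidenceAlgebra K X) φ) (u0 : X) :
    IsHalfDerivation K (IncidenceAlgebra K X) (sigmaPart φ u0) :=
  have had := isHalfDerivation_ad (K := K) fun a b =>
    hφ.lie_centralPart_eq_zero (lie_apply_self_eq_zero a b)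
  (hφ.sub had).sub (hφ.isHalfDerivation_scalarPart u0)

theorem IsHalfDerivation.isDiagI_sigmaPart (hφ : IsHalfDerivation K (IncidenceAlgebra K X) φ)
    (u0 : X) {f : IncidenceAlgebra K X} (hf : IsDiagI f) : IsDiagI (sigmaPart φ u0 f) := by
  intro u v huv
  rw [sigmaPart_apply, IncidenceAlgebra.sub_apply, IncidenceAlgebra.sub_apply,
    hφ.apply_of_isDiagI_eq_lie_centralPart hf huv, IncidenceAlgebra.constSMul_apply,
    IncidenceAlgebra.one_apply, if_neg huv, smul_zero, sub_self, sub_zero]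

theorem IsHalfDerivation.isDecomposition_sigmaPart
    (hφ : IsHalfDerivation K (IncidenceAlgebra K X) φ) (u0 : X) :
    IsDecomposition φ u0 (centralPart φ, fun p => edgeWeight (sigmaPart φ u0) p.1.1 p.1.2,
      fun x => φ (eI K x x le_rfl) u0 u0) := by
  have hσ := hφ.isHalfDerivation_sigmaPart u0
  have hdiag : IsDiagonalityPreserving (sigmaPart φ u0) := fun _ => hφ.isDiagI_sigmaPart u0
  refine ⟨⟨hφ.centralPart_mem_derivedSpan, fun f hf => hφ.lie_centralPart_eq_zero
      (apply_self_eq_zero_of_mem_derivedSpan hf)⟩, hσ.constOnChains_edgeWeight hdiag,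
    hσ.constOnCycles_edgeWeight hdiag, sigmaPart φ u0, scalarPart φ u0, hσ, hdiag,
    fun _ _ hxy => hσ.apply_eI_of_lt hdiag hxy, fun x => ?_, fun x => rfl,
    fun x y hxy => ?_, fun a => ?_⟩
  · rw [sigmaPart_apply, IncidenceAlgebra.sub_apply, IncidenceAlgebra.sub_apply,
      lie_apply_self_eq_zero, IncidenceAlgebra.constSMul_apply, IncidenceAlgebra.one_apply,
      if_pos rfl, smul_eq_mul, mul_one, sub_zero, sub_self]
  · change φ (eI K x y hxy.le) u0 u0 • (1 : IncidenceAlgebra K X) = 0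
    rw [hφ.apply_eI_apply_self_eq_zero hxy, zero_smul]
  · rw [sigmaPart_apply]
    change φ a = _ + _ + φ a u0 u0 • 1
    abel

end Decomposition

theorem statement17_general (K X : Type*) [Field K] [CharZero K] [PartialOrder X]
    [LocallyFiniteOrder X] [DecidableEq X] (u0 : X)
    (φ : IncidenceAlgebra K X →ₗ[K] IncidenceAlgebra K X)
    (hφ : IsHalfDerivation K (IncidenceAlgebra K X) φ) :
    ∃! t : IncidenceAlgebra K X × (LtPairs X → K) × (X → K),
      (t.1 ∈ derivedSpan K (IncidenceAlgebra K X) ∧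
        ∀ f ∈ derivedSpan K (IncidenceAlgebra K X), ⁅t.1, f⁆ = 0) ∧
      ConstOnChains t.2.1 ∧ ConstOnCycles t.2.1 ∧
      ∃ φσ φκ : IncidenceAlgebra K X →ₗ[K] IncidenceAlgebra K X,
        IsHalfDerivation K (IncidenceAlgebra K X) φσ ∧
        (∀ f : IncidenceAlgebra K X, IsDiagI f → IsDiagI (φσ f)) ∧
        (∀ (x y : X) (h : x < y),
            φσ (eI K x y h.le) = t.2.1 ⟨(x, y), h⟩ • eI K x y h.le) ∧
        (∀ x : X, φσ (eI K x x le_rfl) u0 u0 = 0) ∧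
        (∀ x : X, φκ (eI K x x le_rfl) = t.2.2 x • (1 : IncidenceAlgebra K X)) ∧
        (∀ (x y : X) (h : x < y), φκ (eI K x y h.le) = 0) ∧
        (∀ a : IncidenceAlgebra K X, φ a = ⁅t.1, a⁆ + φσ a + φκ a) := by
  have hexists := hφ.isDecomposition_sigmaPart u0
  exact ⟨_, hexists, fun t ht =>
    (eq_of_isDecomposition ht).trans (eq_of_isDecomposition hexists).symm⟩

/-- every `1/2`-derivation `φ` of `I(X,K)` is uniquely
`φ = ad_c + φ_σ + φ_κ` with `c ∈ Z([I(X,K), I(X,K)])`, `σ : X²_< → K` constant on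
chains and cycles, and `κ : X → K`. -/
theorem statement17 (K X : Type*) [Field K] [CharZero K] [PartialOrder X] [Fintype X]
    [LocallyFiniteOrder X] [DecidableEq X] (hconn : ConnectedPoset X) (u0 : X)
    (φ : IncidenceAlgebra K X →ₗ[K] IncidenceAlgebra K X)
    (hφ : IsHalfDerivation K (IncidenceAlgebra K X) φ) :
    ∃! t : IncidenceAlgebra K X × (LtPairs X → K) × (X → K),
      (t.1 ∈ derivedSpan K (IncidenceAlgebra K X) ∧
        ∀ f ∈ derivedSpan K (IncidenceAlgebra K X), ⁅t.1, f⁆ = 0) ∧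
      ConstOnChains t.2.1 ∧ ConstOnCycles t.2.1 ∧
      ∃ φσ φκ : IncidenceAlgebra K X →ₗ[K] IncidenceAlgebra K X,
        IsHalfDerivation K (IncidenceAlgebra K X) φσ ∧
        (∀ f : IncidenceAlgebra K X, IsDiagI f → IsDiagI (φσ f)) ∧
        (∀ (x y : X) (h : x < y),
            φσ (eI K x y h.le) = t.2.1 ⟨(x, y), h⟩ • eI K x y h.le) ∧
        (∀ x : X, φσ (eI K x x le_rfl) u0 u0 = 0) ∧
        (∀ x : X, φκ (eI K x x le_rfl) = t.2.2 x • (1 : IncidenceAlgebra K X)) ∧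
        (∀ (x y : X) (h : x < y), φκ (eI K x y h.le) = 0) ∧
        (∀ a : IncidenceAlgebra K X, φ a = ⁅t.1, a⁆ + φσ a + φκ a) :=
  statement17_general K X u0 φ hφ
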